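/- Let c(α) := ∫₀¹ erf(√(α/(8t))) dt for α > 0. Then lim_{α → ∞} (1 − c(α)) · α^{3/2} · e^{α/8} = 16 √(2/π); that is, 1 − c(α) ∼ 16 √(2/π) · e^{−α/8} / α^{3/2} as α → ∞. -/

import Mathlib

open MeasureTheory Filter

/-- The error function `erf x = (2/√π) ∫_0^x e^{-s²} ds`. -/
noncomputable def erf (x : ℝ) : ℝ :=
  (2 / Real.sqrt Real.pi) * ∫ s in (0:ℝ)..x, Real.exp (-s ^ 2)

/-- `c(α) = ∫_0^1 erf(√(α/(8t))) dt`. -/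
noncomputable def cFun (α : ℝ) : ℝ :=
  ∫ t in (0:ℝ)..1, erf (Real.sqrt (α / (8 * t)))

/-!
Put `x = √(α/8)`. For `t > 0` the function
`P(t) = (t + 2x²)(1 - erf(x/√t)) - (2x/√π) √t e^{-x²/t}`
is a primitive of `1 - erf(x/√t)` tending to `0` as `t → 0⁺`, so `1 - c(α) = P(1)`.
In terms of the Gaussian tails `J_n(x) = ∫_x^∞ e^{-s²} s^{-n} ds` we have
`1 - erf x = (2/√π) J_0(x)`, and integration by parts gives
`J_n + (n+1)/2 · J_{n+2} = e^{-x²}/(2x^{n+1})`. Two instances of this recurrence turn `P(1)`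
into `(2/√π)(3/2 · x² J_4 - J_2/2)`, and the same recurrence with `J_{n+2} ≥ 0` squeezes
`x^{n+1} e^{x²} J_n(x)` between `1/2 - (n+1)/(4x²)` and `1/2`.
Hence `x³ e^{x²} (1 - c(α)) → 1/√π`, and `α^{3/2} = 16√2 x³`.
-/

open Set Real Topology

noncomputable def gaussTail (n : ℕ) (x : ℝ) : ℝ := ∫ s in Ioi x, exp (-s ^ 2) / s ^ n

lemma integrable_exp_neg_sq : Integrable fun s : ℝ => exp (-s ^ 2) := by
  simpa using integrable_exp_neg_mul_sq one_pos

section GaussTail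

variable (n : ℕ) {x : ℝ}

lemma integrableOn_exp_neg_sq_div_pow (hx : 0 < x) :
    IntegrableOn (fun s => exp (-s ^ 2) / s ^ n) (Ioi x) := by
  refine (integrable_exp_neg_sq.integrableOn.div_const (x ^ n)).mono'
    (by fun_prop : Measurable fun s : ℝ => exp (-s ^ 2) / s ^ n).aestronglyMeasurable ?_
  filter_upwards [ae_restrict_mem measurableSet_Ioi] with s hs
  have hs0 : 0 < s := hx.trans hs
  rw [norm_of_nonneg (by positivity)]
  gcongr
  exact hs.le

lemma gaussTail_nonneg (hx : 0 ≤ x) : 0 ≤ gaussTail n x :=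
  setIntegral_nonneg measurableSet_Ioi fun s hs => by
    have : 0 < s := hx.trans_lt hs
    positivity

lemma gaussTail_add_gaussTail (hx : 0 < x) :
    gaussTail n x + (n + 1) / 2 * gaussTail (n + 2) x = exp (-x ^ 2) / (2 * x ^ (n + 1)) := by
  have hderiv : ∀ s ∈ Ici x, HasDerivAt (fun s => -(exp (-s ^ 2) / (2 * s ^ (n + 1))))
      (exp (-s ^ 2) / s ^ n + (n + 1) / 2 * (exp (-s ^ 2) / s ^ (n + 2))) s := by
    intro s hs
    have hs0 : 0 < s := hx.trans_le hs
    have := (((hasDerivAt_pow 2 s).fun_neg.exp).fun_div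
      ((hasDerivAt_pow (n + 1) s).const_mul 2) (by positivity)).fun_neg
    refine this.congr_deriv ?_
    simp only [Nat.add_sub_cancel, Nat.cast_ofNat, Nat.cast_succ]
    field_simp
    ring
  have hlim : Tendsto (fun s => -(exp (-s ^ 2) / (2 * s ^ (n + 1)))) atTop (𝓝 0) := by
    have hexp : Tendsto (fun s : ℝ => exp (-s ^ 2)) atTop (𝓝 0) :=
      tendsto_exp_atBot.comp (tendsto_neg_atTop_atBot.comp (tendsto_pow_atTop two_ne_zero))
    have hpow : Tendsto (fun s : ℝ => 2 * s ^ (n + 1)) atTop atTop :=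
      (tendsto_pow_atTop n.succ_ne_zero).const_mul_atTop two_pos
    simpa using (hexp.div_atTop hpow).neg
  have := integral_Ioi_of_hasDerivAt_of_tendsto' hderiv
    ((integrableOn_exp_neg_sq_div_pow n hx).add
      ((integrableOn_exp_neg_sq_div_pow (n + 2) hx).const_mul _)) hlim
  rwa [integral_add (integrableOn_exp_neg_sq_div_pow n hx)
    ((integrableOn_exp_neg_sq_div_pow (n + 2) hx).const_mul _), integral_const_mul,
    zero_sub, neg_neg] at this

lemma gaussTail_le (hx : 0 < x) : gaussTail n x ≤ exp (-x ^ 2) / (2 * x ^ (n + 1)) := by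
  rw [← gaussTail_add_gaussTail n hx, le_add_iff_nonneg_right]
  have := gaussTail_nonneg (n + 2) hx.le
  positivity

lemma tendsto_gaussTail :
    Tendsto (fun x => x ^ (n + 1) * exp (x ^ 2) * gaussTail n x) atTop (𝓝 (1 / 2)) := by
  have hrec : ∀ x > 0, x ^ (n + 1) * exp (x ^ 2) * gaussTail n x
      = 1 / 2 - (n + 1) / 2 * (x ^ (n + 1) * exp (x ^ 2) * gaussTail (n + 2) x) := fun x hx => by
    rw [eq_sub_of_add_eq (gaussTail_add_gaussTail n hx), exp_neg]
    field_simp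
  have hlower : Tendsto (fun x : ℝ => 1 / 2 - ((n : ℝ) + 1) / 2 * (2 * x ^ 2)⁻¹) atTop
      (𝓝 (1 / 2)) := by
    simpa using ((tendsto_inv_atTop_zero.comp
      ((tendsto_pow_atTop two_ne_zero).const_mul_atTop two_pos)).const_mul
      ((n + 1 : ℝ) / 2)).const_sub (1 / 2 : ℝ)
  refine tendsto_of_tendsto_of_tendsto_of_le_of_le' hlower tendsto_const_nhds ?_ ?_ <;>
    filter_upwards [eventually_gt_atTop 0] with x hx <;> rw [hrec x hx]
  · have hbound : x ^ (n + 1) * exp (x ^ 2) * gaussTail (n + 2) x ≤ (2 * x ^ 2)⁻¹ :=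
      calc _ ≤ x ^ (n + 1) * exp (x ^ 2) * (exp (-x ^ 2) / (2 * x ^ (n + 2 + 1))) := by
            gcongr
            exact gaussTail_le _ hx
        _ = (2 * x ^ 2)⁻¹ := by
            rw [exp_neg]
            field_simp
            ring
    gcongr
  · have := gaussTail_nonneg (n + 2) hx.le
    rw [sub_le_self_iff]
    positivity

end GaussTail

lemma hasDerivAt_erf (x : ℝ) : HasDerivAt erf (2 / √π * exp (-x ^ 2)) x :=
  (intervalIntegral.integral_hasDerivAt_right integrable_exp_neg_sq.intervalIntegrable
    integrable_exp_neg_sq.aestronglyMeasurable.stronglyMeasurableAtFilter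
    (by fun_prop)).const_mul _

lemma continuous_erf : Continuous erf :=
  continuous_iff_continuousAt.mpr fun x => (hasDerivAt_erf x).continuousAt

lemma one_sub_erf_eq_gaussTail {x : ℝ} (hx : 0 ≤ x) :
    1 - erf x = 2 / √π * gaussTail 0 x := by
  have hsplit : (∫ s in (0 : ℝ)..x, exp (-s ^ 2)) + gaussTail 0 x = √π / 2 := by
    simp only [gaussTail, pow_zero, div_one]
    rw [intervalIntegral.integral_of_le hx, ← setIntegral_union (Ioc_disjoint_Ioi le_rfl)
      measurableSet_Ioi integrable_exp_neg_sq.integrableOn integrable_exp_neg_sq.integrableOn,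
      Ioc_union_Ioi_eq_Ioi hx]
    simpa using integral_gaussian_Ioi 1
  rw [erf, eq_sub_of_add_eq' hsplit]
  field_simp

lemma erf_nonneg {x : ℝ} (hx : 0 ≤ x) : 0 ≤ erf x := by
  have := intervalIntegral.integral_nonneg (μ := volume) hx fun s _ => (exp_pos (-s ^ 2)).le
  unfold erf
  positivity

lemma erf_le_one {x : ℝ} (hx : 0 ≤ x) : erf x ≤ 1 := by
  have : 0 ≤ 2 / √π * gaussTail 0 x := mul_nonneg (by positivity) (gaussTail_nonneg 0 hx)
  linarith [one_sub_erf_eq_gaussTail hx]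

lemma tendsto_erf_atTop : Tendsto erf atTop (𝓝 1) := by
  have := (intervalIntegral_tendsto_integral_Ioi 0 integrable_exp_neg_sq.integrableOn
    tendsto_id).const_mul (2 / √π)
  rwa [show ∫ s in Ioi (0 : ℝ), exp (-s ^ 2) = √π / 2 by simpa using integral_gaussian_Ioi 1,
    div_mul_div_cancel₀ (sqrt_pos.2 pi_pos).ne', div_self two_ne_zero] at this

noncomputable def oneSubErfPrimitive (x t : ℝ) : ℝ :=
  (t + 2 * x ^ 2) * (1 - erf (x / √t)) - 2 * x / √π * √t * exp (-(x ^ 2 / t))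

lemma hasDerivAt_oneSubErfPrimitive (x : ℝ) {t : ℝ} (ht : 0 < t) :
    HasDerivAt (oneSubErfPrimitive x) (1 - erf (x / √t)) t := by
  have hsqrt : HasDerivAt (fun t => √t) (1 / (2 * √t)) t := hasDerivAt_sqrt ht.ne'
  have hst : 0 < √t := sqrt_pos.2 ht
  have harg : HasDerivAt (fun t => x / √t) (-(x * (1 / (2 * √t))) / √t ^ 2) t := by
    simpa using (hasDerivAt_const t x).fun_div hsqrt hst.ne'
  have hquot : HasDerivAt (fun t => x ^ 2 / t) (-(x ^ 2) / t ^ 2) t := by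
    simpa using (hasDerivAt_const t (x ^ 2)).fun_div (hasDerivAt_id t) ht.ne'
  have := (((hasDerivAt_id t).add_const (2 * x ^ 2)).fun_mul
    (((hasDerivAt_erf _).comp t harg).const_sub 1)).fun_sub
    ((hsqrt.const_mul (2 * x / √π)).fun_mul hquot.fun_neg.exp)
  refine this.congr_deriv ?_
  simp only [Function.comp_apply, id, div_pow, sq_sqrt ht.le]
  have hu := sq_sqrt ht.le
  generalize √t = u at hu hst ⊢
  subst hu
  field_simp
  ring

lemma tendsto_oneSubErfPrimitive_nhdsGT_zero {x : ℝ} (hx : 0 < x) :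
    Tendsto (oneSubErfPrimitive x) (𝓝[>] 0) (𝓝 0) := by
  have hsqrt : Tendsto (fun t : ℝ => √t) (𝓝[>] 0) (𝓝[>] 0) :=
    tendsto_nhdsWithin_of_tendsto_nhds_of_eventually_within _
      (by simpa using (continuous_sqrt.tendsto 0).mono_left nhdsWithin_le_nhds)
      (eventually_nhdsWithin_of_forall fun t ht => sqrt_pos.2 ht)
  have herf : Tendsto (fun t => erf (x / √t)) (𝓝[>] 0) (𝓝 1) := by
    refine tendsto_erf_atTop.comp ?_
    simpa [div_eq_mul_inv] using (tendsto_inv_nhdsGT_zero.comp hsqrt).const_mul_atTop hx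
  have hexp : Tendsto (fun t => exp (-(x ^ 2 / t))) (𝓝[>] 0) (𝓝 0) := by
    refine tendsto_exp_atBot.comp (tendsto_neg_atTop_atBot.comp ?_)
    exact (tendsto_inv_nhdsGT_zero.const_mul_atTop (pow_pos hx 2)).congr
      fun t => (div_eq_mul_inv _ _).symm
  unfold oneSubErfPrimitive
  simpa using (((tendsto_id.mono_left nhdsWithin_le_nhds).add_const (2 * x ^ 2)).mul
    (herf.const_sub 1)).sub
    (((hsqrt.mono_right nhdsWithin_le_nhds).const_mul (2 * x / √π)).mul hexp)

lemma intervalIntegrable_erf_div_sqrt {x : ℝ} (hx : 0 ≤ x) (a b : ℝ) :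
    IntervalIntegrable (fun t => erf (x / √t)) volume a b := by
  have hmeas : Measurable fun t => erf (x / √t) :=
    continuous_erf.measurable.comp (measurable_const.div continuous_sqrt.measurable)
  refine intervalIntegrable_const.mono_fun' (g := fun _ => (1 : ℝ)) hmeas.aestronglyMeasurable
    (ae_of_all _ fun t => ?_)
  have ht := div_nonneg hx (sqrt_nonneg t)
  show ‖erf (x / √t)‖ ≤ 1
  rw [norm_of_nonneg (erf_nonneg ht)]
  exact erf_le_one ht

lemma one_sub_cFun_eq {x : ℝ} (hx : 0 < x) : 1 - cFun (8 * x ^ 2) = oneSubErfPrimitive x 1 := by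
  have hintegrand : ∀ t, erf (√(8 * x ^ 2 / (8 * t))) = erf (x / √t) := fun t => by
    rw [mul_div_mul_left _ _ (by norm_num : (8 : ℝ) ≠ 0), sqrt_div (sq_nonneg x), sqrt_sq hx.le]
  have hderiv : ∀ t > 0, HasDerivAt (fun t => t - oneSubErfPrimitive x t) (erf (x / √t)) t :=
    fun t ht => by simpa using (hasDerivAt_id' t).fun_sub (hasDerivAt_oneSubErfPrimitive x ht)
  have hzero : Tendsto (fun t => t - oneSubErfPrimitive x t) (𝓝[>] 0) (𝓝 0) := by
    simpa using (tendsto_id.mono_left nhdsWithin_le_nhds).sub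
      (tendsto_oneSubErfPrimitive_nhdsGT_zero hx)
  have := intervalIntegral.integral_eq_sub_of_hasDerivAt_of_tendsto one_pos
    (fun t ht => hderiv t ht.1) (intervalIntegrable_erf_div_sqrt hx.le 0 1) hzero
    ((hderiv 1 one_pos).continuousAt.tendsto.mono_left nhdsWithin_le_nhds)
  simp only [cFun, hintegrand, this]
  ring

lemma one_sub_cFun_eq_gaussTail {x : ℝ} (hx : 0 < x) :
    1 - cFun (8 * x ^ 2) = 2 / √π * (3 / 2 * x ^ 2 * gaussTail 4 x - gaussTail 2 x / 2) := by
  have h0 := gaussTail_add_gaussTail 0 hx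
  have h2 := gaussTail_add_gaussTail 2 hx
  norm_num at h0 h2
  rw [one_sub_cFun_eq hx, oneSubErfPrimitive, sqrt_one, div_one, one_sub_erf_eq_gaussTail hx.le]
  linear_combination (norm := (field_simp; ring)) 2 / √π * ((1 + 2 * x ^ 2) * h0 - x ^ 2 * h2)

lemma eight_mul_sq_rpow_three_halves {x : ℝ} (hx : 0 ≤ x) :
    (8 * x ^ 2) ^ ((3 : ℝ) / 2) = 16 * √2 * x ^ 3 := by
  have h8 : (8 : ℝ) * x ^ 2 = (2 * √2 * x) ^ (2 : ℝ) := by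
    rw [rpow_two, mul_pow, mul_pow, sq_sqrt zero_le_two]
    ring
  rw [h8, ← rpow_mul (by positivity)]
  norm_num
  rw [mul_pow, mul_pow, pow_three √2, ← mul_assoc, mul_self_sqrt zero_le_two]
  ring

/-- `1 - c(α) ~ 16√(2/π) e^{-α/8}/α^{3/2}` as `α → ∞`, i.e.
`(1 - c(α)) α^{3/2} e^{α/8} → 16√(2/π)`. -/
theorem cFun_subleading_asymp :
    Tendsto (fun α : ℝ => (1 - cFun α) * α ^ ((3 : ℝ) / 2) * Real.exp (α / 8))
      atTop (nhds (16 * Real.sqrt (2 / Real.pi))) := by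
  set F := fun α : ℝ => (1 - cFun α) * α ^ ((3 : ℝ) / 2) * exp (α / 8)
  suffices Tendsto (fun x => F (8 * x ^ 2)) atTop (𝓝 (16 * √(2 / π))) by
    have hx : Tendsto (fun α : ℝ => √(α / 8)) atTop atTop :=
      tendsto_sqrt_atTop.comp (tendsto_id.atTop_div_const (by norm_num))
    refine (this.comp hx).congr' ?_
    filter_upwards [eventually_ge_atTop 0] with α hα
    simp only [Function.comp_apply, sq_sqrt (div_nonneg hα (by norm_num : (0 : ℝ) ≤ 8))]
    rw [mul_div_cancel₀ _ (by norm_num)]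
  have hlim := (((tendsto_gaussTail 4).const_mul (3 / 2)).sub
    ((tendsto_gaussTail 2).const_mul (1 / 2))).const_mul (32 * √2 / √π)
  rw [show 32 * √2 / √π * (3 / 2 * (1 / 2) - 1 / 2 * (1 / 2)) = 16 * √(2 / π) by
    rw [sqrt_div zero_le_two]; ring] at hlim
  refine hlim.congr' ?_
  filter_upwards [eventually_gt_atTop 0] with x hx
  simp only [F]
  rw [one_sub_cFun_eq_gaussTail hx, eight_mul_sq_rpow_three_halves hx.le,
    mul_div_cancel_left₀ _ (by norm_num : (8 : ℝ) ≠ 0)]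
  ring
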